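/- arXiv:2104.06742 — 5 statements merged into one kernel-verified Lean document; each statement's English description precedes it below -/
import Mathlib

section
/- Let Λ = diag(λ_1,...,λ_S) with λ_s > 0, ρ_UL > 0, and D = diag(ρ_{1,DL},...,ρ_{S,DL}) with ρ_{s,DL} ≥ 0. Then log det(Λ + ρ_UL^{-1} I) - log det(ρ_UL^{-1} I + (Λ^{-1} + D)^{-1}) = Σ_{s=1}^S log(1 + λ_s^2 ρ_UL ρ_{s,DL} / (λ_s(ρ_UL + ρ_{s,DL}) + 1)). -/
open Matrix

theorem Matrix.inv_diagonal_of_ne_zero {n K : Type*} [Fintype n] [DecidableEq n] [Field K]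
    {v : n → K} (hv : ∀ i, v i ≠ 0) : (diagonal v)⁻¹ = diagonal fun i => (v i)⁻¹ := by
  refine inv_eq_right_inv ?_
  rw [diagonal_mul_diagonal, ← diagonal_one]
  exact congrArg diagonal (funext fun i => mul_inv_cancel₀ (hv i))

theorem Real.log_det_diagonal {n : Type*} [Fintype n] [DecidableEq n] {v : n → ℝ}
    (hv : ∀ i, v i ≠ 0) : Real.log (diagonal v).det = ∑ i, Real.log (v i) := by
  rw [det_diagonal, Real.log_prod fun i _ => hv i]

theorem single_mode_capacity_closed_form {l d ρ : ℝ} (hl : 0 < l) (hd : 0 ≤ d) (hρ : 0 < ρ) :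
    Real.log (l + ρ⁻¹) - Real.log (ρ⁻¹ + (l⁻¹ + d)⁻¹)
      = Real.log (1 + l ^ 2 * ρ * d / (l * (ρ + d) + 1)) := by
  rw [← Real.log_div (by positivity) (by positivity)]
  congr 1
  field_simp
  ring

/-- Closed-form single-user secret-key capacity (eq. (7)): for real diagonal
`Λ = diag(λ) ≻ 0`, `ρUL > 0` and `D = diag(d) ⪰ 0`,
`log det(Λ + ρUL⁻¹ I) - log det(ρUL⁻¹ I + (Λ⁻¹ + D)⁻¹)
  = Σ_s log(1 + λ_s² ρUL d_s / (λ_s (ρUL + d_s) + 1))`. -/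
theorem single_user_capacity_closed_form
    (S : ℕ) (lam d : Fin S → ℝ) (hlam : ∀ s, 0 < lam s) (hd : ∀ s, 0 ≤ d s)
    (ρUL : ℝ) (hρ : 0 < ρUL) :
    Real.log ((Matrix.diagonal lam + ρUL⁻¹ • (1 : Matrix (Fin S) (Fin S) ℝ)).det)
      - Real.log ((ρUL⁻¹ • (1 : Matrix (Fin S) (Fin S) ℝ)
          + ((Matrix.diagonal lam)⁻¹ + Matrix.diagonal d)⁻¹).det)
      = ∑ s, Real.log (1 + (lam s) ^ 2 * ρUL * d s / (lam s * (ρUL + d s) + 1)) := by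
  have hinner : ∀ s, 0 < (lam s)⁻¹ + d s := fun s =>
    add_pos_of_pos_of_nonneg (inv_pos.2 (hlam s)) (hd s)
  have hA : diagonal lam + ρUL⁻¹ • (1 : Matrix (Fin S) (Fin S) ℝ)
      = diagonal fun s => lam s + ρUL⁻¹ := by
    rw [smul_one_eq_diagonal, diagonal_add]
  have hB : ρUL⁻¹ • (1 : Matrix (Fin S) (Fin S) ℝ) + ((diagonal lam)⁻¹ + diagonal d)⁻¹
      = diagonal fun s => ρUL⁻¹ + ((lam s)⁻¹ + d s)⁻¹ := by
    rw [inv_diagonal_of_ne_zero fun s => (hlam s).ne', diagonal_add,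
      inv_diagonal_of_ne_zero fun s => (hinner s).ne', smul_one_eq_diagonal, diagonal_add]
  rw [hA, hB, Real.log_det_diagonal fun s => (add_pos (hlam s) (inv_pos.2 hρ)).ne',
    Real.log_det_diagonal fun s => (add_pos (inv_pos.2 hρ) (inv_pos.2 (hinner s))).ne',
    ← Finset.sum_sub_distrib]
  exact Finset.sum_congr rfl fun s _ => single_mode_capacity_closed_form (hlam s) (hd s) hρ
end

section
/- The scalar function f(p) = log(1 + λ² ρ p / (λ(ρ + p) + 1)) is concave and strictly increasing in p on [0, ∞) for any fixed λ > 0 and ρ > 0. -/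
/-
The inner function is the Möbius map `p ↦ 1 + k p / (l p + c)` with `k = λ²ρ`, `l = λ`,
`c = λρ + 1`. Writing `k p / (l p + c) = k / l - (k c / l) (l p + c)⁻¹` exhibits it as a
constant minus a positive multiple of a convex function, hence concave, and it is strictly
increasing since `c > 0`. It is also at least `1`, so the concave, increasing `log` preserves
both properties.
-/

open Set

/- Unlike `ConcaveOn.comp`, this only needs `g` on a convex superset of `f '' s`: the image
itself need not be convex when `f` is discontinuous at the boundary of `s`. -/
theorem ConcaveOn.comp_of_mapsTo {𝕜 E α β : Type*} [Semiring 𝕜] [PartialOrder 𝕜]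
    [AddCommMonoid E] [SMul 𝕜 E] [AddCommMonoid α] [PartialOrder α] [SMul 𝕜 α]
    [AddCommMonoid β] [PartialOrder β] [SMul 𝕜 β] {s : Set E} {t : Set β} {f : E → β}
    {g : β → α} (hg : ConcaveOn 𝕜 t g) (hf : ConcaveOn 𝕜 s f) (hg' : MonotoneOn g t)
    (hst : MapsTo f s t) : ConcaveOn 𝕜 s (g ∘ f) :=
  ⟨hf.1, fun _ hx _ hy _ _ ha hb hab =>
    (hg.2 (hst hx) (hst hy) ha hb hab).trans <|
      hg' (hg.1 (hst hx) (hst hy) ha hb hab) (hst <| hf.1 hx hy ha hb hab) <|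
        hf.2 hx hy ha hb hab⟩

theorem ConcaveOn.log {E : Type*} [AddCommMonoid E] [SMul ℝ E] {s : Set E} {f : E → ℝ}
    (hf : ConcaveOn ℝ s f) (hpos : ∀ x ∈ s, 0 < f x) :
    ConcaveOn ℝ s fun x => Real.log (f x) :=
  strictConcaveOn_log_Ioi.concaveOn.comp_of_mapsTo hf Real.strictMonoOn_log.monotoneOn hpos

theorem convexOn_inv_mul_add {l c : ℝ} (hl : 0 ≤ l) (hc : 0 < c) :
    ConvexOn ℝ (Ici 0) fun p : ℝ => (l * p + c)⁻¹ := by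
  let A : ℝ →ᵃ[ℝ] ℝ := AffineMap.lineMap c (l + c)
  have hmaps : Ici 0 ⊆ A ⁻¹' Ioi 0 := fun p (hp : 0 ≤ p) => by
    simp only [A, mem_preimage, AffineMap.lineMap_apply_module', mem_Ioi, smul_eq_mul,
      add_sub_cancel_right]
    positivity
  refine (((convexOn_zpow (-1)).comp_affineMap A).subset hmaps (convex_Ici 0)).congr
    fun p _ => ?_
  simp only [A, Function.comp_apply, AffineMap.lineMap_apply_module', zpow_neg_one]
  ring_nf

theorem concaveOn_mul_div_mul_add {k l c : ℝ} (hk : 0 ≤ k) (hl : 0 < l) (hc : 0 < c) :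
    ConcaveOn ℝ (Ici 0) fun p : ℝ => k * p / (l * p + c) := by
  have hkcl : 0 ≤ k * c / l := by positivity
  refine (((convexOn_inv_mul_add hl.le hc).smul hkcl).neg.add_const (k / l)).congr
    fun p (hp : 0 ≤ p) => ?_
  have : 0 < l * p + c := by positivity
  simp only [Pi.add_apply, Pi.neg_apply, smul_eq_mul]
  field_simp
  ring

theorem strictMonoOn_mul_div_mul_add {k l c : ℝ} (hk : 0 < k) (hl : 0 ≤ l) (hc : 0 < c) :
    StrictMonoOn (fun p : ℝ => k * p / (l * p + c)) (Ici 0) := by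
  intro x (hx : 0 ≤ x) y (hy : 0 ≤ y) hxy
  rw [div_lt_div_iff₀ (by positivity) (by positivity)]
  nlinarith [mul_pos (mul_pos hk hc) (sub_pos.mpr hxy)]

/-- The per-mode secret-key capacity `f(p) = log(1 + λ²ρp / (λ(ρ+p)+1))` is concave
and strictly increasing on `[0, ∞)` for fixed `λ, ρ > 0`. -/
theorem per_mode_capacity_concave_strictMono
    (lam ρ : ℝ) (hlam : 0 < lam) (hρ : 0 < ρ) :
    ConcaveOn ℝ (Set.Ici 0)
        (fun p : ℝ => Real.log (1 + lam ^ 2 * ρ * p / (lam * (ρ + p) + 1)))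
      ∧ StrictMonoOn
        (fun p : ℝ => Real.log (1 + lam ^ 2 * ρ * p / (lam * (ρ + p) + 1)))
        (Set.Ici 0) := by
  have hden (p : ℝ) : lam * (ρ + p) + 1 = lam * p + (lam * ρ + 1) := by ring
  have hk : 0 < lam ^ 2 * ρ := by positivity
  have hc : 0 < lam * ρ + 1 := by positivity
  have hpos : MapsTo (fun p : ℝ => 1 + lam ^ 2 * ρ * p / (lam * p + (lam * ρ + 1)))
      (Ici 0) (Ioi 0) := fun p (hp : 0 ≤ p) => by
    simp only [mem_Ioi]
    positivity
  simp only [hden]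
  exact ⟨((concaveOn_const 1 (convex_Ici 0)).add
      (concaveOn_mul_div_mul_add hk.le hlam hc)).log hpos,
    Real.strictMonoOn_log.comp ((strictMonoOn_mul_div_mul_add hk hlam.le hc).const_add 1) hpos⟩
end

section
/- For fixed total power budget P > 0, the maximum of Σ_{s=1}^S log(1 + λ_s² ρ p_s / (λ_s(ρ + p_s) + 1)) over p_s ≥ 0 with Σ_s p_s ≤ P is attained by a water-filling allocation: there exists μ > 0 such that p_s = max(μ - 1/λ_s, 0) for all s, and Σ_s p_s = P. -/
/-! Write `r(q)` for the rate of a mode with gain `λ` at power `q`. The argument of its logarithm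
factors as `(1 + λ q)(1 + λ ρ) / (1 + λ ρ + λ q)`, so `log x ≤ x - 1` applied to a ratio of two such
arguments gives `r(q) - r(p) ≤ λ² ρ (q - p) / ((1 + λ p)(1 + λ ρ + λ q))`. At the water-filling power
`p = μ - 1/λ` this is at most `ν (q - p)` with `ν = ρ / (μ (μ + ρ))`, a constant independent of `λ`
(it is the slope of `r` there), and for modes with `λ μ ≤ 1`, `p = 0`, the same bound holds because
`r'(0) ≤ ν`. Summing these tangent bounds, the water-filling allocation maximises the Lagrangian, hence
the sum rate under the budget. A water level spending exactly `P` exists by the intermediate value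
theorem. -/

open Real Finset

noncomputable def modeRate (l ρ q : ℝ) : ℝ :=
  log (1 + l ^ 2 * ρ * q / (l * (ρ + q) + 1))

lemma modeRate_sub_le {l ρ p q : ℝ} (hl : 0 ≤ l) (hρ : 0 ≤ ρ) (hp : 0 ≤ p) (hq : 0 ≤ q) :
    modeRate l ρ q - modeRate l ρ p ≤ l ^ 2 * ρ * (q - p) / ((1 + l * p) * (1 + l * ρ + l * q)) := by
  have hA : ∀ x, 0 ≤ x → 0 < 1 + l ^ 2 * ρ * x / (l * (ρ + x) + 1) := fun x hx => by positivity
  have hratio : (1 + l ^ 2 * ρ * q / (l * (ρ + q) + 1)) / (1 + l ^ 2 * ρ * p / (l * (ρ + p) + 1))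
      = 1 + l ^ 2 * ρ * (q - p) / ((1 + l * p) * (1 + l * ρ + l * q)) := by
    have : 0 < 1 + l * p := by positivity
    have : 0 < 1 + l * ρ + l * q := by positivity
    field_simp
    ring
  have hlog := log_le_sub_one_of_pos (div_pos (hA q hq) (hA p hp))
  rw [log_div (hA q hq).ne' (hA p hp).ne', hratio] at hlog
  unfold modeRate
  linarith

lemma secant_le_waterLevel_slope {l ρ μ q : ℝ} (hl : 0 < l) (hρ : 0 < ρ) (hμ : 0 < μ) (hq : 0 ≤ q) :
    l ^ 2 * ρ * (q - max (μ - l⁻¹) 0)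
        / ((1 + l * max (μ - l⁻¹) 0) * (1 + l * ρ + l * q))
      ≤ ρ / (μ * (μ + ρ)) * (q - max (μ - l⁻¹) 0) := by
  rcases le_total μ l⁻¹ with hμl | hμl
  · rw [max_eq_right (sub_nonpos.mpr hμl)]
    have hlμ : l * μ ≤ 1 := by rwa [← le_div_iff₀' hl, one_div]
    rw [div_mul_eq_mul_div, div_le_div_iff₀ (by positivity) (by positivity)]
    have hρq : 0 ≤ ρ * q := mul_nonneg hρ.le hq
    nlinarith [mul_le_mul_of_nonneg_left hlμ (mul_nonneg hρq (mul_nonneg hl.le hρ.le)),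
      mul_le_mul_of_nonneg_left (mul_le_one₀ hlμ (by positivity) hlμ) hρq,
      mul_nonneg hρq (mul_nonneg hl.le hq)]
  · rw [max_eq_left (sub_nonneg.mpr hμl)]
    have hlp : 1 + l * (μ - l⁻¹) = l * μ := by rw [mul_sub, mul_inv_cancel₀ hl.ne']; ring
    rw [hlp, div_mul_eq_mul_div, div_le_div_iff₀ (by positivity) (by positivity)]
    have hd : 1 + l * ρ + l * q = l * (μ + ρ) + l * (q - (μ - l⁻¹)) := by
      rw [mul_sub l q, mul_sub l μ, mul_inv_cancel₀ hl.ne']; ring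
    rw [hd]
    nlinarith [mul_nonneg (mul_nonneg (pow_pos hl 3).le (mul_nonneg hρ.le hμ.le))
      (sq_nonneg (q - (μ - l⁻¹)))]

lemma modeRate_le_waterfilling_add {l ρ μ q : ℝ} (hl : 0 < l) (hρ : 0 < ρ) (hμ : 0 < μ) (hq : 0 ≤ q) :
    modeRate l ρ q
      ≤ modeRate l ρ (max (μ - l⁻¹) 0) + ρ / (μ * (μ + ρ)) * (q - max (μ - l⁻¹) 0) := by
  have := (modeRate_sub_le hl.le hρ.le (le_max_right _ 0) hq).trans
    (secant_le_waterLevel_slope hl hρ hμ hq)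
  linarith

theorem sum_le_sum_of_le_add_mul_sub {ι : Type*} (s : Finset ι) {a b p q : ι → ℝ} {ν : ℝ}
    (hν : 0 ≤ ν) (hab : ∀ i ∈ s, a i ≤ b i + ν * (q i - p i))
    (hqp : ∑ i ∈ s, q i ≤ ∑ i ∈ s, p i) :
    ∑ i ∈ s, a i ≤ ∑ i ∈ s, b i :=
  calc ∑ i ∈ s, a i ≤ ∑ i ∈ s, (b i + ν * (q i - p i)) := sum_le_sum hab
    _ = ∑ i ∈ s, b i + ν * (∑ i ∈ s, q i - ∑ i ∈ s, p i) := by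
      rw [sum_add_distrib, ← mul_sum, sum_sub_distrib]
    _ ≤ ∑ i ∈ s, b i := by nlinarith

theorem exists_sum_max_sub_eq {ι : Type*} [Fintype ι] [Nonempty ι] (c : ι → ℝ) {P : ℝ}
    (hP : 0 ≤ P) : ∃ μ, ∑ i, max (μ - c i) 0 = P := by
  obtain ⟨i₀, hi₀⟩ := Finite.exists_min c
  have hcont : Continuous fun μ => ∑ i, max (μ - c i) 0 := by fun_prop
  have hlow : ∑ i, max (c i₀ - c i) 0 = 0 :=
    sum_eq_zero fun i _ => max_eq_right (sub_nonpos.mpr (hi₀ i))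
  have hhigh : P ≤ ∑ i, max (c i₀ + P - c i) 0 :=
    calc P = max (c i₀ + P - c i₀) 0 := by rw [add_sub_cancel_left, max_eq_left hP]
      _ ≤ ∑ i, max (c i₀ + P - c i) 0 :=
        single_le_sum (f := fun i => max (c i₀ + P - c i) 0) (fun i _ => le_max_right _ _)
          (mem_univ i₀)
  obtain ⟨μ, -, hμ⟩ := intermediate_value_Icc (le_add_of_nonneg_right hP) hcont.continuousOn
    ⟨hlow.le.trans hP, hhigh⟩
  exact ⟨μ, hμ⟩

lemma pos_of_sum_max_sub_eq {ι : Type*} [Fintype ι] {c : ι → ℝ} (hc : ∀ i, 0 < c i) {μ P : ℝ}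
    (hμ : ∑ i, max (μ - c i) 0 = P) (hP : 0 < P) : 0 < μ := by
  by_contra! hμ₀
  have : ∑ i, max (μ - c i) 0 = 0 :=
    sum_eq_zero fun i _ => max_eq_right (by linarith [hc i])
  linarith

/-- Water-filling optimality: for a total power budget `P > 0`, the maximum of
`Σ_s log(1 + λ_s² ρ p_s / (λ_s(ρ + p_s) + 1))` over `p_s ≥ 0`, `Σ_s p_s ≤ P`
is attained at `p_s = max(μ - 1/λ_s, 0)` for some water level `μ > 0`
with `Σ_s p_s = P`. -/
theorem waterfilling_optimal
    (S : ℕ) (lam : Fin S → ℝ) (hlam : ∀ s, 0 < lam s)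
    (ρ P : ℝ) (hρ : 0 < ρ) (hP : 0 < P) (hS : 0 < S) :
    ∃ μ : ℝ, 0 < μ ∧
      (∑ s, max (μ - (lam s)⁻¹) 0) = P ∧
      ∀ q : Fin S → ℝ, (∀ s, 0 ≤ q s) → (∑ s, q s) ≤ P →
        (∑ s, Real.log (1 + (lam s) ^ 2 * ρ * q s / (lam s * (ρ + q s) + 1)))
          ≤ ∑ s, Real.log (1 + (lam s) ^ 2 * ρ * max (μ - (lam s)⁻¹) 0
              / (lam s * (ρ + max (μ - (lam s)⁻¹) 0) + 1)) := by
  have : Nonempty (Fin S) := ⟨⟨0, hS⟩⟩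
  obtain ⟨μ, hμP⟩ := exists_sum_max_sub_eq (fun s => (lam s)⁻¹) hP.le
  have hμ : 0 < μ := pos_of_sum_max_sub_eq (fun s => inv_pos.mpr (hlam s)) hμP hP
  refine ⟨μ, hμ, hμP, fun q hq hqP => ?_⟩
  exact sum_le_sum_of_le_add_mul_sub univ (by positivity)
    (fun s _ => modeRate_le_waterfilling_add (hlam s) hρ hμ (hq s)) (hqP.trans hμP.ge)
end

section
/- Under the assumptions of the previous statement (pairwise-orthogonal subspaces Q_k and training matrix S_DL = Σ_k Q_k (P_k^{1/2} | 0)), the secret-key capacity of user k equals C_k = Σ_{s=1}^{S_k} log(1 + λ_{s,k}² ρ_{k,UL} ρ_{s,k,DL} / (λ_{s,k}(ρ_{k,UL} + ρ_{s,k,DL}) + 1)), where ρ_{s,k,DL} = p_{s,k}/σ_DL² and C_k is given by the log-det formula of equation (5) with C_DL = S_DL S_DL^†. -/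
/-!
Orthonormality of each `Q k` and the mutual orthogonality of the `Q k` give
`(Q k)ᴴ * S_DL = (P_k^{1/2} | 0)`, hence `(Q k)ᴴ * C_DL * Q k = P_k`. Every matrix in the log-det
formula is then diagonal, so the capacity splits into a sum over the streams `s`, and each
summand is an identity between rational functions of `λ_{s,k}`, `ρ_{k,UL}` and `ρ_{s,k,DL}`.
-/

open Matrix

theorem capacity_scalar_closed_form {a r d : ℝ} (ha : 0 < a) (hr : 0 < r) (hd : 0 ≤ d) :
    Real.log (a + r⁻¹) - Real.log (r⁻¹ + (a⁻¹ + d)⁻¹)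
      = Real.log (1 + a ^ 2 * r * d / (a * (r + d) + 1)) := by
  rw [← Real.log_div (by positivity) (by positivity)]
  congr 1
  field_simp
  ring

namespace Matrix

theorem conjTranspose_mul_sum_mul_of_orthonormal {ι m p R : Type*} [Fintype ι] [Fintype m]
    [Semiring R] [StarRing R] {n : ι → Type*} [∀ i, Fintype (n i)] [∀ i, DecidableEq (n i)]
    (Q : ∀ i, Matrix m (n i) R) (B : ∀ i, Matrix (n i) p R) (k : ι)
    (hQk : (Q k)ᴴ * Q k = 1) (hQ : ∀ j ≠ k, (Q k)ᴴ * Q j = 0) :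
    (Q k)ᴴ * ∑ j, Q j * B j = B k := by
  rw [Matrix.mul_sum, Finset.sum_eq_single_of_mem k (Finset.mem_univ k), ← Matrix.mul_assoc, hQk,
    Matrix.one_mul]
  intro j _ hj
  rw [← Matrix.mul_assoc, hQ j hj, Matrix.zero_mul]

theorem mul_conjTranspose_eq_diagonal_of_injective {m n R : Type*} [Fintype m] [DecidableEq m]
    [DecidableEq n] [Semiring R] [StarRing R] {e : n → m} (he : Function.Injective e)
    (c : n → R) (B : Matrix n m R) (hB : ∀ s t, B s t = if e s = t then c s else 0) :
    B * Bᴴ = diagonal fun s => c s * star (c s) := by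
  ext s s'
  simp only [mul_apply, hB, conjTranspose_apply, ite_mul, zero_mul, Finset.sum_ite_eq,
    Finset.mem_univ, if_true, he.eq_iff, diagonal_apply]
  by_cases h : s = s'
  · simp [h]
  · simp [h, Ne.symm h]

theorem inv_diagonal_of_ne_zero_s15 {n K : Type*} [Fintype n] [DecidableEq n] [Field K]
    {v : n → K} (hv : ∀ i, v i ≠ 0) : (diagonal v)⁻¹ = diagonal v⁻¹ := by
  refine inv_eq_right_inv ?_
  rw [diagonal_mul_diagonal, ← diagonal_one]
  exact congrArg diagonal (funext fun i => mul_inv_cancel₀ (hv i))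

theorem re_det_diagonal_ofReal {n : Type*} [Fintype n] [DecidableEq n] (f : n → ℝ) :
    (diagonal fun s => (f s : ℂ)).det.re = ∏ s, f s := by
  rw [det_diagonal, ← Complex.ofReal_prod, Complex.ofReal_re]

theorem log_det_sub_log_det_diagonal {n : Type*} [Fintype n] [DecidableEq n] {a d : n → ℝ}
    {r : ℝ} (ha : ∀ s, 0 < a s) (hr : 0 < r) (hd : ∀ s, 0 ≤ d s) :
    Real.log ((diagonal (fun s => (a s : ℂ)) + (r : ℂ)⁻¹ • (1 : Matrix n n ℂ)).det.re)
      - Real.log (((r : ℂ)⁻¹ • (1 : Matrix n n ℂ)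
          + ((diagonal fun s => (a s : ℂ))⁻¹ + diagonal fun s => (d s : ℂ))⁻¹).det.re)
      = ∑ s, Real.log (1 + a s ^ 2 * r * d s / (a s * (r + d s) + 1)) := by
  have hpos : ∀ s, 0 < (a s)⁻¹ + d s := fun s => by have := ha s; have := hd s; positivity
  have hsignal : diagonal (fun s => (a s : ℂ)) + (r : ℂ)⁻¹ • (1 : Matrix n n ℂ)
      = diagonal fun s => ((a s + r⁻¹ : ℝ) : ℂ) := by
    rw [smul_one_eq_diagonal, diagonal_add]
    push_cast; rfl
  have hnoise : (r : ℂ)⁻¹ • (1 : Matrix n n ℂ)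
      + ((diagonal fun s => (a s : ℂ))⁻¹ + diagonal fun s => (d s : ℂ))⁻¹
      = diagonal fun s => ((r⁻¹ + ((a s)⁻¹ + d s)⁻¹ : ℝ) : ℂ) := by
    rw [inv_diagonal_of_ne_zero_s15 fun s => Complex.ofReal_ne_zero.2 (ha s).ne', diagonal_add,
      inv_diagonal_of_ne_zero_s15 fun s => ?_, smul_one_eq_diagonal, diagonal_add]
    · push_cast; rfl
    · simp only [Pi.inv_apply]
      exact_mod_cast (hpos s).ne'
  rw [hsignal, hnoise, re_det_diagonal_ofReal, re_det_diagonal_ofReal,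
    Real.log_prod fun s _ => by have := ha s; positivity,
    Real.log_prod fun s _ => by have := hpos s; positivity, ← Finset.sum_sub_distrib]
  exact Finset.sum_congr rfl fun s _ => capacity_scalar_closed_form (ha s) hr (hd s)

end Matrix

theorem multiuser_capacity_closed_form_general
    (M K : ℕ) (S : Fin K → ℕ) (T : ℕ)
    (hT : T = Finset.univ.sup S)
    (Q : ∀ k : Fin K, Matrix (Fin M) (Fin (S k)) ℂ)
    (hortho : ∀ k, (Q k)ᴴ * Q k = 1)
    (hcross : ∀ k k', k ≠ k' →
      (Q k)ᴴ * Q k' = (0 : Matrix (Fin (S k)) (Fin (S k')) ℂ))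
    (lam : ∀ k : Fin K, Fin (S k) → ℝ) (hlam : ∀ k s, 0 < lam k s)
    (ρUL : Fin K → ℝ) (hρUL : ∀ k, 0 < ρUL k)
    (σDL : ℝ)
    (p : ∀ k : Fin K, Fin (S k) → ℝ) (hp : ∀ k s, 0 ≤ p k s)
    (B : ∀ k : Fin K, Matrix (Fin (S k)) (Fin T) ℂ)
    (hB : ∀ k (s : Fin (S k)) (t : Fin T),
      B k s t = if (t : ℕ) = (s : ℕ) then (Real.sqrt (p k s) : ℂ) else 0)
    (SDL : Matrix (Fin M) (Fin T) ℂ)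
    (hSDL : SDL = ∑ k, Q k * B k) :
    ∀ k : Fin K,
      Real.log ((Matrix.diagonal (fun s => (lam k s : ℂ))
          + ((ρUL k)⁻¹ : ℂ) • (1 : Matrix (Fin (S k)) (Fin (S k)) ℂ)).det.re)
        - Real.log ((((ρUL k)⁻¹ : ℂ) • (1 : Matrix (Fin (S k)) (Fin (S k)) ℂ)
            + ((Matrix.diagonal (fun s => (lam k s : ℂ)))⁻¹
              + ((σDL ^ 2)⁻¹ : ℂ) • ((Q k)ᴴ * (SDL * SDLᴴ) * Q k))⁻¹).det.re)
      = ∑ s, Real.log (1 + (lam k s) ^ 2 * ρUL k * (p k s / σDL ^ 2)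
          / (lam k s * (ρUL k + p k s / σDL ^ 2) + 1)) := by
  intro k
  have hST : S k ≤ T := hT ▸ Finset.le_sup (Finset.mem_univ k)
  have hQS : (Q k)ᴴ * SDL = B k := hSDL ▸
    conjTranspose_mul_sum_mul_of_orthonormal Q B k (hortho k) fun j hj => hcross k j hj.symm
  have hBB : B k * (B k)ᴴ = diagonal fun s => (p k s : ℂ) := by
    rw [mul_conjTranspose_eq_diagonal_of_injective (Fin.castLE_injective hST)
      (fun s => (Real.sqrt (p k s) : ℂ)) _ fun s t => by
        rw [hB]; exact if_congr (by rw [Fin.ext_iff, Fin.val_castLE, eq_comm]) rfl rfl]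
    congr 1
    ext s
    rw [Complex.star_def, Complex.conj_ofReal, ← Complex.ofReal_mul, Real.mul_self_sqrt (hp k s)]
  have hCDL : ((σDL ^ 2)⁻¹ : ℂ) • ((Q k)ᴴ * (SDL * SDLᴴ) * Q k)
      = diagonal fun s => ((p k s / σDL ^ 2 : ℝ) : ℂ) := by
    rw [← Matrix.mul_assoc, hQS, Matrix.mul_assoc, ← conjTranspose_conjTranspose (Q k),
      ← conjTranspose_mul, hQS, hBB, ← diagonal_smul]
    congr 1
    ext s
    simp only [Pi.smul_apply, smul_eq_mul]
    push_cast
    ring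
  rw [hCDL]
  exact log_det_sub_log_det_diagonal (hlam k) (hρUL k) fun s => div_nonneg (hp k s) (sq_nonneg σDL)

/-- Theorem 2 (capacity formula): under pairwise-orthogonal user subspaces and the
training matrix `S_DL = Σ_k Q_k (P_k^{1/2} | 0)`, the secret-key capacity of user
`k` given by the log-det formula (eq. (5)) with `C_DL = S_DL S_DLᴴ` equals
`Σ_s log(1 + λ_{s,k}² ρ_{k,UL} ρ_{s,k,DL} / (λ_{s,k}(ρ_{k,UL} + ρ_{s,k,DL}) + 1))`
with `ρ_{s,k,DL} = p_{s,k}/σ_DL²`. -/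
theorem multiuser_capacity_closed_form
    (M K : ℕ) (hK : 0 < K) (S : Fin K → ℕ) (T : ℕ)
    (hT : T = Finset.univ.sup S)
    (Q : ∀ k : Fin K, Matrix (Fin M) (Fin (S k)) ℂ)
    (hortho : ∀ k, (Q k)ᴴ * Q k = 1)
    (hcross : ∀ k k', k ≠ k' →
      (Q k)ᴴ * Q k' = (0 : Matrix (Fin (S k)) (Fin (S k')) ℂ))
    (lam : ∀ k : Fin K, Fin (S k) → ℝ) (hlam : ∀ k s, 0 < lam k s)
    (ρUL : Fin K → ℝ) (hρUL : ∀ k, 0 < ρUL k)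
    (σDL : ℝ) (hσ : 0 < σDL)
    (p : ∀ k : Fin K, Fin (S k) → ℝ) (hp : ∀ k s, 0 ≤ p k s)
    (B : ∀ k : Fin K, Matrix (Fin (S k)) (Fin T) ℂ)
    (hB : ∀ k (s : Fin (S k)) (t : Fin T),
      B k s t = if (t : ℕ) = (s : ℕ) then (Real.sqrt (p k s) : ℂ) else 0)
    (SDL : Matrix (Fin M) (Fin T) ℂ)
    (hSDL : SDL = ∑ k, Q k * B k) :
    ∀ k : Fin K,
      Real.log ((Matrix.diagonal (fun s => (lam k s : ℂ))
          + ((ρUL k)⁻¹ : ℂ) • (1 : Matrix (Fin (S k)) (Fin (S k)) ℂ)).det.re)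
        - Real.log ((((ρUL k)⁻¹ : ℂ) • (1 : Matrix (Fin (S k)) (Fin (S k)) ℂ)
            + ((Matrix.diagonal (fun s => (lam k s : ℂ)))⁻¹
              + ((σDL ^ 2)⁻¹ : ℂ) • ((Q k)ᴴ * (SDL * SDLᴴ) * Q k))⁻¹).det.re)
      = ∑ s, Real.log (1 + (lam k s) ^ 2 * ρUL k * (p k s / σDL ^ 2)
          / (lam k s * (ρUL k + p k s / σDL ^ 2) + 1)) :=
  multiuser_capacity_closed_form_general M K S T hT Q hortho hcross lam hlam ρUL hρUL σDL p hp B hB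
    SDL hSDL
end

section
/- Let A be an S×S Hermitian positive semidefinite matrix with diagonal entries a_{ss}, and let Λ = diag(λ_s) ≻ 0, ρ > 0, σ > 0. Then log det(ρ^{-1}I + (Λ^{-1} + σ^{-2}A)^{-1}) ≥ log det(ρ^{-1}I + (Λ^{-1} + σ^{-2}diag(a_{11},...,a_{SS}))^{-1}); equivalently, the secret-key capacity C(A) = log det(Λ+ρ^{-1}I) - log det(ρ^{-1}I + (Λ^{-1}+σ^{-2}A)^{-1}) is maximized over all PSD A with fixed diagonal by a diagonal A, i.e., C(A) ≤ C(diag(A)). -/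
open Matrix ComplexOrder

set_option linter.unusedSectionVars false

lemma psd_smul {n : Type*} [Fintype n] {A : Matrix n n ℂ} (hA : A.PosSemidef) {t : ℝ} (ht : 0 ≤ t) :
    ((t : ℂ) • A).PosSemidef := by
  rw [posSemidef_iff_dotProduct_mulVec]
  constructor
  · unfold Matrix.IsHermitian
    rw [conjTranspose_smul, hA.1.eq]
    congr 1
    simp
  · intro x
    rw [Matrix.smul_mulVec, dotProduct_smul]
    exact smul_nonneg (by exact_mod_cast ht) (hA.dotProduct_mulVec_nonneg x)

lemma pd_diag_pos {n : Type*} [Fintype n] [DecidableEq n] {M : Matrix n n ℂ} (hM : M.PosDef) (i : n) : 0 < M i i := by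
  have := hM.dotProduct_mulVec_pos (x := Pi.single i 1) (by simp [Function.ne_iff])
  simpa [dotProduct, Pi.single_apply] using this

lemma psd_diag_nonneg {n : Type*} [Fintype n] [DecidableEq n] {M : Matrix n n ℂ} (hM : M.PosSemidef) (i : n) : 0 ≤ M i i := by
  have := hM.dotProduct_mulVec_nonneg (Pi.single i 1)
  simpa [dotProduct, Pi.single_apply] using this

lemma pd_of_psd_det_ne_zero {n : Type*} [Fintype n] [DecidableEq n] {M : Matrix n n ℂ} (h : M.PosSemidef) (hd : M.det ≠ 0) :
    M.PosDef := by
  rw [posDef_iff_dotProduct_mulVec]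
  refine ⟨h.1, fun x hx => lt_of_le_of_ne (h.dotProduct_mulVec_nonneg x) fun heq => hx ?_⟩
  have h0 : M *ᵥ x = 0 := (h.dotProduct_mulVec_zero_iff x).mp heq.symm
  have hinj : Function.Injective (M.mulVec) := mulVec_injective_iff_isUnit.mpr
    (isUnit_iff_isUnit_det _ |>.2 hd.isUnit)
  exact hinj (by simpa using h0 : M *ᵥ x = M *ᵥ 0)

lemma pd_reindex {m n : Type*} [Fintype m] [DecidableEq m] [Fintype n] (e : m ≃ n) {M : Matrix n n ℂ}
    (hM : M.PosDef) : (M.submatrix e e).PosDef := by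
  rw [posDef_iff_dotProduct_mulVec]
  constructor
  · exact (isHermitian_submatrix_equiv e).mpr hM.1
  · intro x hx
    have hx' : x ∘ e.symm ≠ 0 := fun h => hx (by
      ext i; have := congrFun h (e i); simpa using this)
    have h2 := hM.dotProduct_mulVec_pos hx'
    rw [submatrix_mulVec_equiv]
    convert h2 using 1
    simp only [dotProduct, Function.comp_apply, Pi.star_apply]
    exact Fintype.sum_equiv e _ _ (fun i => by simp)

theorem key_ineq : ∀ (n : ℕ) (M : Matrix (Fin n) (Fin n) ℂ), M.PosDef → ∀ (t : ℝ), 0 < t →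
    ∀ (e : Fin n → ℂ), (∀ i, M i i ≤ e i) →
    M.det * ∏ i, (1 + (t : ℂ) * e i) ≤ (1 + (t : ℂ) • M).det * ∏ i, e i := by
  intro n
  induction n with
  | zero =>
    intro M _ t _ e _
    simp [Matrix.det_fin_zero]
  | succ n IH =>
    intro M hM t ht e he
    -- reindex to a sum type
    set ε : Fin (n + 1) ≃ Fin n ⊕ Unit :=
      (finSuccEquiv n).trans ((Equiv.optionEquivSumPUnit (Fin n) : Option (Fin n) ≃ Fin n ⊕ Unit)) with hε
    set N : Matrix (Fin n ⊕ Unit) (Fin n ⊕ Unit) ℂ := M.submatrix ε.symm ε.symm with hNdef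
    have hN : N.PosDef := pd_reindex ε.symm hM
    -- notation
    set w : Fin n → ℂ := fun i => N (Sum.inl i) (Sum.inr ()) with hw
    set d₀ : ℂ := N (Sum.inr ()) (Sum.inr ()) with hd₀def
    have hd₀ : 0 < d₀ := pd_diag_pos hN _
    set rd : ℝ := d₀.re with hrd_def
    have hrd : 0 < rd := (Complex.lt_def.mp hd₀).1
    have hd₀re : d₀ = (rd : ℂ) := by
      apply Complex.ext <;> simp [hrd_def, ← (Complex.lt_def.mp hd₀).2]
    set E : Matrix (Fin n) (Fin n) ℂ := Matrix.of (fun i j => N (Sum.inl i) (Sum.inl j)) with hE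
    set c : Matrix (Fin n) Unit ℂ := Matrix.replicateCol Unit w with hc
    -- block decomposition of N
    have hNb : N = fromBlocks E c cᴴ (d₀ • 1) := by
      ext i j
      rcases i with i | i <;> rcases j with j | j
      · simp [fromBlocks, hE]
      · simp [fromBlocks, hc, hw]
      · simp only [fromBlocks, Sum.elim_inr, Sum.elim_inl, conjTranspose_replicateCol,
          Matrix.replicateRow_apply, Pi.star_apply, hc, hw]
        exact (hN.1.apply _ _).symm
      · simp [fromBlocks, hd₀def, Matrix.one_apply]
    -- the 1x1 block is positive definite and invertible
    have hd₀star : star d₀ = d₀ := by rw [hd₀re]; simp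
    have hd₀ne : d₀ ≠ 0 := hd₀.ne'
    have hd_pd : (d₀ • (1 : Matrix Unit Unit ℂ)).PosDef := by
      rw [posDef_iff_dotProduct_mulVec]
      constructor
      · unfold Matrix.IsHermitian
        rw [conjTranspose_smul, conjTranspose_one, hd₀star]
      · intro x hx
        rw [Matrix.smul_mulVec, one_mulVec, dotProduct_smul, smul_eq_mul]
        exact mul_pos hd₀ (dotProduct_star_self_pos_iff.mpr hx)
    haveI : Invertible d₀ := invertibleOfNonzero hd₀ne
    haveI hd_inv : Invertible (d₀ • (1 : Matrix Unit Unit ℂ)) :=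
      Matrix.invertibleOfIsUnitDet _ (hd_pd.det_pos.ne'.isUnit)
    have hd_inv_eq : (d₀ • (1 : Matrix Unit Unit ℂ))⁻¹ = d₀⁻¹ • 1 := by
      rw [Matrix.inv_smul d₀ (A := (1 : Matrix Unit Unit ℂ)) (by simp), inv_one, invOf_eq_inv]
    -- Schur complement of N
    set N₁ : Matrix (Fin n) (Fin n) ℂ := replicateCol Unit w * replicateRow Unit (star w) with hN₁
    set Sm : Matrix (Fin n) (Fin n) ℂ := E - d₀⁻¹ • N₁ with hSm
    have hced : c * (d₀ • (1 : Matrix Unit Unit ℂ))⁻¹ * cᴴ = d₀⁻¹ • N₁ := by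
      rw [hd_inv_eq, hc, conjTranspose_replicateCol, Matrix.mul_smul, Matrix.mul_one, Matrix.smul_mul]
    have hdet_d : (d₀ • (1 : Matrix Unit Unit ℂ)).det = d₀ := by
      simp [Matrix.det_unique]
    have hdetN : N.det = d₀ * Sm.det := by
      rw [hNb, Matrix.det_fromBlocks₂₂, invOf_eq_nonsing_inv, hced, hdet_d, hSm]
    have hSm_psd : Sm.PosSemidef := by
      have h := (Matrix.PosDef.fromBlocks₂₂ E c hd_pd).mp (by rw [← hNb]; exact hN.posSemidef)
      rwa [hced] at h
    have hSm_pd : Sm.PosDef := pd_of_psd_det_ne_zero hSm_psd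
      (right_ne_zero_of_mul (hdetN ▸ hN.det_pos.ne'))
    -- the (1 + t•N) block decomposition
    have hone_b : (1 : Matrix (Fin n ⊕ Unit) (Fin n ⊕ Unit) ℂ) + (t : ℂ) • N
        = fromBlocks (1 + (t : ℂ) • E) ((t : ℂ) • c) ((t : ℂ) • cᴴ)
          ((1 + (t : ℂ) * d₀) • 1) := by
      rw [hNb, ← fromBlocks_one, fromBlocks_smul, fromBlocks_add, zero_add, zero_add,
        smul_smul, add_smul, one_smul]
    set u₀ : ℝ := 1 + t * rd with hu₀def
    have hu₀ : 0 < u₀ := by positivity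
    have h1td₀ : 1 + (t : ℂ) * d₀ = (u₀ : ℂ) := by
      rw [hd₀re, hu₀def]; push_cast; ring
    have h1td₀ne : 1 + (t : ℂ) * d₀ ≠ 0 := by
      rw [h1td₀]; exact_mod_cast hu₀.ne'
    haveI : Invertible (1 + (t : ℂ) * d₀) := invertibleOfNonzero h1td₀ne
    haveI : Invertible ((1 + (t : ℂ) * d₀) • (1 : Matrix Unit Unit ℂ)) :=
      Matrix.invertibleOfIsUnitDet _ (by simp [Matrix.det_unique]; exact h1td₀ne)
    have hd_inv_eq2 : ((1 + (t : ℂ) * d₀) • (1 : Matrix Unit Unit ℂ))⁻¹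
        = (1 + (t : ℂ) * d₀)⁻¹ • 1 := by
      rw [Matrix.inv_smul _ (A := (1 : Matrix Unit Unit ℂ)) (by simp), inv_one, invOf_eq_inv]
    set T : Matrix (Fin n) (Fin n) ℂ :=
      (1 + (t : ℂ) • E) - ((t : ℂ) • c) * ((1 + (t : ℂ) * d₀) • (1 : Matrix Unit Unit ℂ))⁻¹
        * ((t : ℂ) • cᴴ) with hT
    have hdet1N : ((1 : Matrix (Fin n ⊕ Unit) (Fin n ⊕ Unit) ℂ) + (t : ℂ) • N).det
        = (1 + (t : ℂ) * d₀) * T.det := by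
      rw [hone_b, Matrix.det_fromBlocks₂₂, invOf_eq_nonsing_inv, ← hT]
      congr 1
      simp [Matrix.det_unique]
    set β : ℝ := t / rd - t ^ 2 / u₀ with hβdef
    have hβ : 0 < β := by
      have h2 : β = t / (rd * u₀) := by
        rw [hβdef, hu₀def]; field_simp; ring
      rw [h2]; exact div_pos ht (mul_pos hrd hu₀)
    have hT_eq : T = (1 + (t : ℂ) • Sm) + (β : ℂ) • N₁ := by
      rw [hT, hd_inv_eq2, hc, conjTranspose_replicateCol, hSm]
      rw [Matrix.smul_mul, Matrix.mul_smul, Matrix.mul_smul, Matrix.mul_one, Matrix.smul_mul,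
        Matrix.smul_mul, ← hN₁]
      have hco : (β : ℂ) = (t : ℂ) * d₀⁻¹ - (t : ℂ) * ((t : ℂ) * (1 + (t : ℂ) * d₀)⁻¹) := by
        rw [hβdef, hu₀def, hd₀re]; push_cast; ring
      rw [hco]
      module
    -- matrix determinant lemma
    have h1tS_pd : ((1 : Matrix (Fin n) (Fin n) ℂ) + (t : ℂ) • Sm).PosDef :=
      Matrix.PosDef.add_posSemidef Matrix.PosDef.one (psd_smul hSm_pd.posSemidef ht.le)
    set q : ℂ := star w ⬝ᵥ ((1 + (t : ℂ) • Sm)⁻¹ *ᵥ ((β : ℂ) • w)) with hq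
    have hβN₁ : (β : ℂ) • N₁ = replicateCol Unit ((β : ℂ) • w) * replicateRow Unit (star w) := by
      rw [hN₁, Matrix.replicateCol_smul, Matrix.smul_mul]
    have hdetT : T.det = (1 + (t : ℂ) • Sm).det * (1 + q) := by
      rw [hT_eq, hβN₁, Matrix.det_add_replicateCol_mul_replicateRow h1tS_pd.det_pos.ne'.isUnit]
      congr 1
      rw [Matrix.det_unique, Matrix.add_apply, Matrix.one_apply_eq]
      congr 1
      rw [← Matrix.replicateRow_vecMul, Matrix.replicateRow_mul_replicateCol_apply, ← Matrix.dotProduct_mulVec, hq]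
    have hq0 : 0 ≤ q := by
      rw [hq, Matrix.mulVec_smul, dotProduct_smul, smul_eq_mul]
      refine mul_nonneg ?_ (h1tS_pd.inv.posSemidef.dotProduct_mulVec_nonneg w)
      exact_mod_cast hβ.le
    -- diagonal comparisons
    set e' : Fin n → ℂ := fun i => e (ε.symm (Sum.inl i)) with he'
    set eu : ℂ := e (ε.symm (Sum.inr ())) with heu
    have ht' : (0 : ℂ) ≤ (t : ℂ) := by exact_mod_cast ht.le
    have hN₁diag : ∀ i, N₁ i i = w i * star (w i) := by
      intro i
      simp [hN₁, Matrix.mul_apply]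
    have hSm_diag_le : ∀ i, Sm i i ≤ e' i := by
      intro i
      have h1 : Sm i i = E i i - d₀⁻¹ * (w i * star (w i)) := by
        rw [hSm]
        simp [Matrix.sub_apply, hN₁diag i]
      have h2 : (0 : ℂ) ≤ d₀⁻¹ * (w i * star (w i)) := by
        refine mul_nonneg ?_ ?_
        · rw [hd₀re, ← Complex.ofReal_inv]
          exact_mod_cast (inv_nonneg.mpr hrd.le)
        · rw [Complex.star_def, Complex.mul_conj]
          exact_mod_cast Complex.normSq_nonneg _
      calc Sm i i ≤ E i i := by rw [h1]; exact sub_le_self _ h2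
        _ ≤ e' i := he _
    have IH' := IH Sm hSm_pd t ht e' hSm_diag_le
    have heu_le : d₀ ≤ eu := he (ε.symm (Sum.inr ()))
    have heu_nonneg : (0 : ℂ) ≤ eu := hd₀.le.trans heu_le
    have he'_nonneg : ∀ i, (0 : ℂ) ≤ e' i := fun i =>
      ((pd_diag_pos hSm_pd i).le).trans (hSm_diag_le i)
    have hP : (0 : ℂ) ≤ ∏ i, (1 + (t : ℂ) * e' i) :=
      Finset.prod_nonneg fun i _ =>
        add_nonneg zero_le_one (mul_nonneg ht' (he'_nonneg i))
    have hQ : (0 : ℂ) ≤ ∏ i, e' i := Finset.prod_nonneg fun i _ => he'_nonneg i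
    -- transfer the goal along ε
    have hdetM : M.det = N.det := (Matrix.det_submatrix_equiv_self ε.symm M).symm
    have hdet1M : ((1 : Matrix (Fin (n+1)) (Fin (n+1)) ℂ) + (t : ℂ) • M).det
        = ((1 : Matrix (Fin n ⊕ Unit) (Fin n ⊕ Unit) ℂ) + (t : ℂ) • N).det := by
      rw [← Matrix.det_submatrix_equiv_self ε.symm
        ((1 : Matrix (Fin (n+1)) (Fin (n+1)) ℂ) + (t : ℂ) • M)]
      congr 1
      ext i j
      simp [Matrix.submatrix_apply, Matrix.one_apply, hNdef]
    have hprod1 : ∏ i : Fin (n+1), (1 + (t : ℂ) * e i)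
        = (∏ i : Fin n, (1 + (t : ℂ) * e' i)) * (1 + (t : ℂ) * eu) := by
      rw [← Equiv.prod_comp ε.symm (fun j => 1 + (t : ℂ) * e j), Fintype.prod_sum_type]
      simp [he', heu]
    have hprod2 : ∏ i : Fin (n+1), e i = (∏ i : Fin n, e' i) * eu := by
      rw [← Equiv.prod_comp ε.symm e, Fintype.prod_sum_type]
      simp [he', heu]
    rw [hdetM, hdet1M, hprod1, hprod2, hdetN, hdet1N, hdetT]
    -- now pure scalar inequalities
    set DS : ℂ := Sm.det with hDS
    set D1 : ℂ := ((1 : Matrix (Fin n) (Fin n) ℂ) + (t : ℂ) • Sm).det with hD1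
    set P : ℂ := ∏ i, (1 + (t : ℂ) * e' i) with hPdef
    set Q : ℂ := ∏ i, e' i with hQdef
    have hDSnn : (0 : ℂ) ≤ DS := hSm_pd.det_pos.le
    have hD1nn : (0 : ℂ) ≤ D1 := h1tS_pd.det_pos.le
    have h1teu : (0 : ℂ) ≤ 1 + (t : ℂ) * eu :=
      add_nonneg zero_le_one (mul_nonneg ht' heu_nonneg)
    have hstep : d₀ * (1 + (t : ℂ) * eu) ≤ (1 + (t : ℂ) * d₀) * eu := by
      calc d₀ * (1 + (t : ℂ) * eu) = d₀ + (t : ℂ) * (d₀ * eu) := by ring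
        _ ≤ eu + (t : ℂ) * (d₀ * eu) := add_le_add_left heu_le _
        _ = (1 + (t : ℂ) * d₀) * eu := by ring
    calc d₀ * DS * (P * (1 + (t : ℂ) * eu))
        = (d₀ * (1 + (t : ℂ) * eu)) * (DS * P) := by ring
      _ ≤ (d₀ * (1 + (t : ℂ) * eu)) * (D1 * Q) :=
          mul_le_mul_of_nonneg_left IH' (mul_nonneg hd₀.le h1teu)
      _ ≤ ((1 + (t : ℂ) * d₀) * eu) * (D1 * Q) :=
          mul_le_mul_of_nonneg_right hstep (mul_nonneg hD1nn hQ)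
      _ ≤ ((1 + (t : ℂ) * d₀) * eu) * ((D1 * Q) * (1 + q)) := by
          refine mul_le_mul_of_nonneg_left ?_
            (mul_nonneg (by positivity) heu_nonneg)
          exact le_mul_of_one_le_right (mul_nonneg hD1nn hQ)
            (le_add_of_nonneg_right hq0)
      _ = (1 + (t : ℂ) * d₀) * (D1 * (1 + q)) * (Q * eu) := by ring


lemma det_shift {n : Type*} [Fintype n] [DecidableEq n] {X : Matrix n n ℂ} (hX : X.PosDef)
    (z : ℂ) :
    (z • (1 : Matrix n n ℂ) + X⁻¹).det = (X.det)⁻¹ * ((1 : Matrix n n ℂ) + z • X).det := by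
  have h1 : X⁻¹ * ((1 : Matrix n n ℂ) + z • X) = z • (1 : Matrix n n ℂ) + X⁻¹ := by
    rw [Matrix.mul_add, Matrix.mul_one, Matrix.mul_smul,
      Matrix.nonsing_inv_mul _ hX.det_pos.ne'.isUnit, add_comm]
  rw [← h1, det_mul, Matrix.det_nonsing_inv, Ring.inverse_eq_inv]


/-- Structural claim of Theorem 1: the single-user secret-key capacity
`C(A) = log det(Λ + ρ⁻¹I) - log det(ρ⁻¹I + (Λ⁻¹ + σ⁻²A)⁻¹)`, as a function of
the effective training Gram matrix `A ⪰ 0`, is maximized among PSD matrices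
with fixed diagonal by a diagonal matrix: `C(A) ≤ C(diag(A))`. -/
theorem capacity_maximized_by_diagonal
    (S : ℕ) (lam : Fin S → ℝ) (hlam : ∀ s, 0 < lam s)
    (ρ σ : ℝ) (hρ : 0 < ρ) (hσ : 0 < σ)
    (A : Matrix (Fin S) (Fin S) ℂ) (hA : A.PosSemidef) :
    Real.log ((Matrix.diagonal (fun s => (lam s : ℂ))
        + (ρ⁻¹ : ℂ) • (1 : Matrix (Fin S) (Fin S) ℂ)).det.re)
      - Real.log (((ρ⁻¹ : ℂ) • (1 : Matrix (Fin S) (Fin S) ℂ)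
          + ((Matrix.diagonal (fun s => (lam s : ℂ)))⁻¹
            + ((σ ^ 2)⁻¹ : ℂ) • A)⁻¹).det.re)
    ≤ Real.log ((Matrix.diagonal (fun s => (lam s : ℂ))
        + (ρ⁻¹ : ℂ) • (1 : Matrix (Fin S) (Fin S) ℂ)).det.re)
      - Real.log (((ρ⁻¹ : ℂ) • (1 : Matrix (Fin S) (Fin S) ℂ)
          + ((Matrix.diagonal (fun s => (lam s : ℂ)))⁻¹
            + ((σ ^ 2)⁻¹ : ℂ) • Matrix.diagonal (fun s => A s s))⁻¹).det.re) := by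
  set t : ℝ := ρ⁻¹ with htdef
  have ht : 0 < t := inv_pos.mpr hρ
  have hz : (ρ⁻¹ : ℂ) = ((t : ℝ) : ℂ) := by rw [htdef]; push_cast; ring
  set Λ : Matrix (Fin S) (Fin S) ℂ := Matrix.diagonal (fun s => (lam s : ℂ)) with hΛdef
  have hΛi_eq : Λ⁻¹ = Matrix.diagonal (fun s => (((lam s)⁻¹ : ℝ) : ℂ)) := by
    apply Matrix.inv_eq_right_inv
    rw [hΛdef, diagonal_mul_diagonal]
    have hfun : (fun i => (lam i : ℂ) * (((lam i)⁻¹ : ℝ) : ℂ)) = fun _ => (1 : ℂ) := by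
      funext s
      have hne : (lam s : ℂ) ≠ 0 := by exact_mod_cast (hlam s).ne'
      push_cast
      field_simp
    rw [hfun, Matrix.diagonal_one]
  have hsc : ((σ ^ 2)⁻¹ : ℂ) = (((σ ^ 2)⁻¹ : ℝ) : ℂ) := by push_cast; ring
  have hσ2 : (0 : ℝ) ≤ (σ ^ 2)⁻¹ := by positivity
  set B : Matrix (Fin S) (Fin S) ℂ := Λ⁻¹ + ((σ ^ 2)⁻¹ : ℂ) • A with hBdef
  set Bd : Matrix (Fin S) (Fin S) ℂ :=
    Λ⁻¹ + ((σ ^ 2)⁻¹ : ℂ) • Matrix.diagonal (fun s => A s s) with hBddef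
  have hΛi_pd : (Λ⁻¹).PosDef := by
    refine Matrix.PosDef.inv ?_
    rw [hΛdef]
    exact Matrix.PosDef.diagonal fun s => Complex.zero_lt_real.mpr (hlam s)
  have hB_pd : B.PosDef := by
    rw [hBdef, hsc]
    exact hΛi_pd.add_posSemidef (psd_smul hA hσ2)
  have hdiagA_psd : (Matrix.diagonal (fun s => A s s)).PosSemidef :=
    Matrix.PosSemidef.diagonal fun s => psd_diag_nonneg hA s
  have hBd_pd : Bd.PosDef := by
    rw [hBddef, hsc]
    exact hΛi_pd.add_posSemidef (psd_smul hdiagA_psd hσ2)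
  -- real diagonal data
  have hAss : ∀ s, A s s = (((A s s).re : ℝ) : ℂ) := fun s => by
    have h := (Complex.nonneg_iff.mp (psd_diag_nonneg hA s)).2
    exact Complex.ext rfl (by simp [← h])
  have har_nonneg : ∀ s, 0 ≤ (A s s).re := fun s =>
    (Complex.nonneg_iff.mp (psd_diag_nonneg hA s)).1
  set dvr : Fin S → ℝ := fun s => (lam s)⁻¹ + (σ ^ 2)⁻¹ * (A s s).re with hdvrdef
  have hdvr_pos : ∀ s, 0 < dvr s := fun s =>
    add_pos_of_pos_of_nonneg (inv_pos.mpr (hlam s)) (mul_nonneg hσ2 (har_nonneg s))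
  have hBss : ∀ s, B s s = ((dvr s : ℝ) : ℂ) := by
    intro s
    rw [hBdef, Matrix.add_apply, hΛi_eq, Matrix.diagonal_apply_eq, Matrix.smul_apply,
      hAss s, hsc, smul_eq_mul, hdvrdef]
    push_cast
    ring
  have hBd_eq : Bd = Matrix.diagonal (fun s => ((dvr s : ℝ) : ℂ)) := by
    rw [hBddef, hΛi_eq, hsc]
    ext i j
    rcases eq_or_ne i j with h | h
    · subst h
      simp only [Matrix.add_apply, Matrix.smul_apply, Matrix.diagonal_apply_eq, smul_eq_mul,
        hdvrdef]
      rw [hAss i]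
      push_cast [Complex.ofReal_re]
      ring
    · simp [Matrix.diagonal_apply_ne _ h]
  -- key inequality for B
  have K := key_ineq S B hB_pd t ht (fun s => ((dvr s : ℝ) : ℂ))
    (fun s => le_of_eq (hBss s))
  -- realify dets
  have hdetB_pos : (0 : ℂ) < B.det := hB_pd.det_pos
  set b1 : ℝ := B.det.re with hb1
  have hb1_pos : 0 < b1 := (Complex.lt_def.mp hdetB_pos).1
  have hdetB_re : B.det = ((b1 : ℝ) : ℂ) :=
    Complex.ext rfl (by simpa using (Complex.lt_def.mp hdetB_pos).2.symm)
  have h1B_pd : ((1 : Matrix (Fin S) (Fin S) ℂ) + (t : ℂ) • B).PosDef :=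
    Matrix.PosDef.add_posSemidef Matrix.PosDef.one (psd_smul hB_pd.posSemidef ht.le)
  set n1 : ℝ := ((1 : Matrix (Fin S) (Fin S) ℂ) + (t : ℂ) • B).det.re with hn1
  have hn1_pos : 0 < n1 := (Complex.lt_def.mp h1B_pd.det_pos).1
  have hdet1B_re : ((1 : Matrix (Fin S) (Fin S) ℂ) + (t : ℂ) • B).det = ((n1 : ℝ) : ℂ) :=
    Complex.ext rfl (by simpa using (Complex.lt_def.mp h1B_pd.det_pos).2.symm)
  -- real version of the key inequality
  have K' : b1 * ∏ s, (1 + t * dvr s) ≤ n1 * ∏ s, dvr s := by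
    rw [hdetB_re, hdet1B_re] at K
    have hc1 : (∏ s, (1 + (t : ℂ) * ((dvr s : ℝ) : ℂ))) = (((∏ s, (1 + t * dvr s) : ℝ)) : ℂ) := by
      push_cast
      rfl
    have hc2 : (∏ s, ((dvr s : ℝ) : ℂ)) = (((∏ s, dvr s : ℝ)) : ℂ) := by
      push_cast
      rfl
    rw [hc1, hc2] at K
    exact_mod_cast K
  have hprod_pos : 0 < ∏ s, dvr s := Finset.prod_pos fun s _ => hdvr_pos s
  have hprod1_pos : 0 < ∏ s, (1 + t * dvr s) := Finset.prod_pos fun s _ => by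
    have := hdvr_pos s; nlinarith [ht]
  -- compute the two determinants in the goal
  have hXA : (((ρ⁻¹ : ℂ)) • (1 : Matrix (Fin S) (Fin S) ℂ) + B⁻¹).det.re = b1⁻¹ * n1 := by
    rw [det_shift hB_pd, hz, hdetB_re, hdet1B_re, ← Complex.ofReal_inv, ← Complex.ofReal_mul,
      Complex.ofReal_re]
  have hXd : (((ρ⁻¹ : ℂ)) • (1 : Matrix (Fin S) (Fin S) ℂ) + Bd⁻¹).det.re
      = (∏ s, dvr s)⁻¹ * ∏ s, (1 + t * dvr s) := by
    rw [det_shift hBd_pd, hz, hBd_eq]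
    have hd1 : (Matrix.diagonal (fun s => ((dvr s : ℝ) : ℂ))).det
        = (((∏ s, dvr s : ℝ)) : ℂ) := by
      rw [Matrix.det_diagonal]
      push_cast
      rfl
    have hd2 : ((1 : Matrix (Fin S) (Fin S) ℂ)
          + (t : ℂ) • Matrix.diagonal (fun s => ((dvr s : ℝ) : ℂ))).det
        = (((∏ s, (1 + t * dvr s) : ℝ)) : ℂ) := by
      rw [← Matrix.diagonal_one, ← Matrix.diagonal_smul, Matrix.diagonal_add,
        Matrix.det_diagonal]
      push_cast
      rfl
    rw [hd1, hd2, ← Complex.ofReal_inv, ← Complex.ofReal_mul, Complex.ofReal_re]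
  rw [hXA, hXd]
  apply sub_le_sub_left
  rw [Real.log_le_log_iff (by positivity) (by positivity)]
  rw [inv_mul_eq_div, inv_mul_eq_div, div_le_div_iff₀ hprod_pos hb1_pos]
  nlinarith [K']
end
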